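/- arXiv:math/0610750 — 3 statements merged into one kernel-verified Lean document; each statement's English description precedes it below -/
import Mathlib

section
/- For the Wigner semicircle law of variance parameter σ² on [-2σ, 2σ], its Stieltjes transform satisfies f_μ(z) = (1/(2πσ²)) ∫_{-2σ}^{2σ} √(4σ²-x²)/(x-z) dx = (z/(2σ²))(√(1-(2σ/z)²) - 1) for all z in the upper half-plane, where √ denotes the branch with Im√z ≥ 0 iff Im z ≥ 0. -/
open Complex MeasureTheory

lemma semicircle_core_alg (z j sh ch sc : ℂ) (hz : z ≠ 0) (hch : ch ≠ 0)
    (hj2 : j^2 = 4*sc^2 - z^2) (hpy : sh^2 + ch^2 = 1)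
    (hαne : sh/ch - (2*sc+j)/z ≠ 0) (hβne : sh/ch - (2*sc-j)/z ≠ 0)
    (hden : 2*sc*(2*sh*ch) - z ≠ 0) :
    2*sc*(2*ch^2-1) * (2*sc*(2*ch^2-1) / (2*sc*(2*sh*ch) - z))
      = 2*sc*(-(2*sh*ch)) - z + (-j) * ((1/ch^2*(1/2))/(sh/ch - (2*sc+j)/z)
          - (1/ch^2*(1/2))/(sh/ch - (2*sc-j)/z)) := by
  have hden2 : z - 4*sc*sh*ch ≠ 0 := fun h => hden (by linear_combination -h)
  have hα_ch : sh/ch - (2*sc+j)/z = (z*sh - (2*sc+j)*ch)/(z*ch) := by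
    field_simp
  have hβ_ch : sh/ch - (2*sc-j)/z = (z*sh - (2*sc-j)*ch)/(z*ch) := by
    field_simp
  have hP : z*sh - (2*sc+j)*ch ≠ 0 := fun h => hαne (by rw [hα_ch, h, zero_div])
  have hQ : z*sh - (2*sc-j)*ch ≠ 0 := fun h => hβne (by rw [hβ_ch, h, zero_div])
  have hkeyA : (z*sh - (2*sc+j)*ch)*(z*sh - (2*sc-j)*ch) = z*(z - 4*sc*sh*ch) := by
    linear_combination (-ch^2)*hj2 + z^2*hpy
  have hsplit : (1/ch^2*(1/2))/(sh/ch - (2*sc+j)/z)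
      - (1/ch^2*(1/2))/(sh/ch - (2*sc-j)/z) = j/(z - 4*sc*sh*ch) := by
    rw [hα_ch, hβ_ch, div_div_eq_mul_div, div_div_eq_mul_div, div_sub_div _ _ hP hQ,
      div_eq_div_iff (mul_ne_zero hP hQ) hden2]
    field_simp
    linear_combination (-(2*ch*j))*hkeyA
  rw [hsplit]
  have hd4 : z - sc*ch*sh*4 ≠ 0 := fun h => hden2 (by linear_combination h)
  have hd5 : 2^2*sc*ch*sh - z ≠ 0 := fun h => hden (by linear_combination h)
  field_simp
  linear_combination (-(z - 4*sc*sh*ch))*hj2 + (16*sc^2*ch^2*(z - 4*sc*sh*ch))*hpy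

set_option maxHeartbeats 1000000 in
/-- Stieltjes transform of the Wigner semicircle law: explicit formula in the
upper half-plane, with the branch of the square root given by the principal
complex power `w ^ (1/2)`. -/
theorem semicircle_stieltjes_formula (σ : ℝ) (hσ : 0 < σ) (z : ℂ) (hz : 0 < z.im) :
    (1 / (2 * Real.pi * σ ^ 2) : ℂ) *
      ∫ x in (-(2 * σ))..(2 * σ), (Real.sqrt (4 * σ ^ 2 - x ^ 2) : ℂ) / ((x : ℂ) - z)
    = z / (2 * σ ^ 2) * ((1 - (2 * (σ : ℂ) / z) ^ 2) ^ ((1 : ℂ) / 2) - 1) := by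
  have hz0 : z ≠ 0 := fun h => by simp [h] at hz
  obtain ⟨q, hq_def⟩ : ∃ t : ℂ, t = 2 * (σ:ℂ) / z := ⟨_, rfl⟩
  obtain ⟨u, hu_def⟩ : ∃ t : ℂ, t = 1 - q ^ 2 := ⟨_, rfl⟩
  have hu_def2 : u = 1 - (2 * (σ : ℂ) / z) ^ 2 := by rw [hu_def, hq_def]
  have hqim : q.im < 0 := by
    rw [hq_def, div_im]
    have h1 : (2 * (σ:ℂ) : ℂ).im = 0 := by simp
    have h2 : (2 * (σ:ℂ) : ℂ).re = 2 * σ := by simp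
    rw [h1, h2]
    have hn : 0 < Complex.normSq z := normSq_pos.2 hz0
    have : 0 < 2 * σ * z.im / normSq z := by positivity
    simp only [zero_mul, zero_div, sub_zero]
    linarith
  have hure : u.re = 1 - (q.re*q.re - q.im*q.im) := by
    rw [hu_def]; simp [pow_two, Complex.mul_re]
  have huim : u.im = -(q.re*q.im + q.im*q.re) := by
    rw [hu_def]; simp [pow_two, Complex.mul_im]
  have hu_slit : u ∈ Complex.slitPlane := by
    rw [Complex.mem_slitPlane_iff]
    by_cases hqre : q.re = 0
    · left
      rw [hure, hqre]
      nlinarith [sq_nonneg q.im, hqim]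
    · right
      rw [huim]
      intro h
      have h2 : q.re * q.im = 0 := by nlinarith
      rcases mul_eq_zero.mp h2 with h' | h'
      · exact hqre h'
      · exact absurd h' (ne_of_lt hqim)
  have hu0 : u ≠ 0 := Complex.slitPlane_ne_zero hu_slit
  -- w and its properties
  obtain ⟨w, hw_def⟩ : ∃ t : ℂ, t = u ^ ((1:ℂ)/2) := ⟨_, rfl⟩
  have hlim : (Complex.log u * ((1:ℂ)/2)).im = Complex.arg u / 2 := by
    rw [Complex.mul_im]
    simp [Complex.log_im]
    ring
  have hw2 : w ^ 2 = u := by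
    rw [hw_def, ← Complex.cpow_natCast, ← Complex.cpow_mul]
    · norm_num
    · rw [hlim]
      have := Complex.neg_pi_lt_arg u
      nlinarith [Real.pi_pos]
    · rw [hlim]
      have h2 := Complex.arg_le_pi u
      nlinarith [Real.pi_pos]
  have harg_lt : Complex.arg u < Real.pi := by
    rw [Complex.arg_lt_pi_iff]
    rcases Complex.mem_slitPlane_iff.mp hu_slit with h | h
    · exact Or.inl h.le
    · exact Or.inr h
  have hw_re : 0 < w.re := by
    rw [hw_def, Complex.cpow_def_of_ne_zero hu0, Complex.exp_re]
    rw [hlim]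
    have h1 := Complex.neg_pi_lt_arg u
    have hcos : 0 < Real.cos (Complex.arg u / 2) := by
      apply Real.cos_pos_of_mem_Ioo
      rw [Set.mem_Ioo]
      constructor <;> linarith
    positivity
  have hw0 : w ≠ 0 := by
    intro h; rw [h] at hw_re; simp at hw_re
  -- s = z * w
  obtain ⟨s, hs_def⟩ : ∃ t : ℂ, t = z * w := ⟨_, rfl⟩
  have hs2 : s^2 = z^2 - 4*(σ:ℂ)^2 := by
    rw [hs_def, mul_pow, hw2, hu_def, hq_def]
    field_simp
    ring
  have hs0 : s ≠ 0 := by rw [hs_def]; exact mul_ne_zero hz0 hw0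
  -- roots
  obtain ⟨α, hα_def⟩ : ∃ t : ℂ, t = (2*(σ:ℂ) + I*s)/z := ⟨_, rfl⟩
  obtain ⟨β, hβ_def⟩ : ∃ t : ℂ, t = (2*(σ:ℂ) - I*s)/z := ⟨_, rfl⟩
  have hαβ : α * β = 1 := by
    rw [hα_def, hβ_def]
    field_simp
    linear_combination hs2 - s^2*Complex.I_sq
  have hsum' : z * (α + β) = 4*(σ:ℂ) := by
    rw [hα_def, hβ_def]
    field_simp
    ring
  have hdiff : α - β = 2*I*w := by
    rw [hα_def, hβ_def, hs_def]
    field_simp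
    ring
  have hquad : z*(α^2+1) = 4*(σ:ℂ)*α := by
    linear_combination α*hsum' - z*hαβ
  have hαim_ne : α.im ≠ 0 := by
    intro h
    have hα_eq : α = ((α.re : ℝ) : ℂ) := Complex.ext (by simp) (by simp [h])
    rw [hα_eq] at hquad
    have him := congrArg Complex.im hquad
    have hl : (z*(((α.re : ℝ) : ℂ)^2+1)).im = z.im * (α.re^2+1) := by
      have : (((α.re : ℝ) : ℂ)^2+1) = ((α.re^2+1 : ℝ) : ℂ) := by push_cast; ring
      rw [this, Complex.mul_im]
      simp [← Complex.ofReal_pow]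
    have hr : (4*(σ:ℂ)*((α.re : ℝ) : ℂ)).im = 0 := by
      have : (4*(σ:ℂ)*((α.re : ℝ) : ℂ)) = ((4*σ*α.re : ℝ) : ℂ) := by push_cast; ring
      rw [this, Complex.ofReal_im]
    rw [hl, hr] at him
    nlinarith [sq_nonneg α.re]
  have hα0 : α ≠ 0 := by
    intro h
    rw [h, zero_mul] at hαβ
    exact zero_ne_one hαβ
  have hβ_inv : β = α⁻¹ := by
    apply eq_inv_of_mul_eq_one_left
    linear_combination hαβ
  have hβim : β.im = -α.im / Complex.normSq α := by
    rw [hβ_inv, Complex.inv_im]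
  have hnsq : 0 < Complex.normSq α := Complex.normSq_pos.2 hα0
  have hdiff_im : α.im - β.im = 2*w.re := by
    have h := congrArg Complex.im hdiff
    simp only [Complex.sub_im, Complex.mul_im, Complex.mul_re, Complex.I_re, Complex.I_im] at h
    simpa using h
  have hαim_pos : 0 < α.im := by
    rcases lt_or_gt_of_ne hαim_ne with h | h
    · exfalso
      have hβpos : 0 < β.im := by
        rw [hβim]
        exact div_pos (by linarith) hnsq
      linarith [hw_re]
    · exact h
  have hβim_neg : β.im < 0 := by
    rw [hβim]
    exact div_neg_of_neg_of_pos (by linarith) hnsq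
  -- endpoint log computation
  have him_ne : ∀ v : ℂ, v.im ≠ 0 → v ≠ 0 := fun v hv h => hv (by rw [h]; simp)
  have h1α : ((1:ℂ) - α).im < 0 := by simp only [Complex.sub_im, Complex.one_im]; linarith
  have h1β : ((1:ℂ) - β).im > 0 := by simp only [Complex.sub_im, Complex.one_im]; linarith
  have hm1α : ((-1:ℂ) - α).im < 0 := by
    simp only [Complex.sub_im, Complex.neg_im, Complex.one_im]; linarith
  have hm1β : ((-1:ℂ) - β).im > 0 := by
    simp only [Complex.sub_im, Complex.neg_im, Complex.one_im]; linarith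
  have hargpos : ∀ v : ℂ, 0 < v.im → 0 < Complex.arg v := by
    intro v hv
    rcases lt_or_eq_of_le (Complex.arg_nonneg_iff.2 hv.le) with h | h
    · exact h
    · exfalso
      have := Complex.arg_eq_zero_iff.1 h.symm
      linarith [this.2]
  have hP : ((1:ℂ)-α)*(-1-β) = α-β := by linear_combination hαβ
  have hQ : ((-1:ℂ)-α)*(1-β) = β-α := by linear_combination hαβ
  have e1 : Complex.log ((1:ℂ)-α) + Complex.log (-1-β) = Complex.log (α-β) := by
    rw [← hP]
    refine (Complex.log_mul (him_ne _ (ne_of_lt h1α)) (him_ne _ (ne_of_gt hm1β)) ?_).symm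
    constructor
    · have := Complex.neg_pi_lt_arg ((1:ℂ)-α)
      have h2 := hargpos _ hm1β
      linarith
    · have := Complex.arg_neg_iff.2 h1α
      have h2 := Complex.arg_le_pi ((-1:ℂ)-β)
      linarith
  have e2 : Complex.log ((-1:ℂ)-α) + Complex.log (1-β) = Complex.log (β-α) := by
    rw [← hQ]
    refine (Complex.log_mul (him_ne _ (ne_of_lt hm1α)) (him_ne _ (ne_of_gt h1β)) ?_).symm
    constructor
    · have := Complex.neg_pi_lt_arg ((-1:ℂ)-α)
      have h2 := hargpos _ h1β
      linarith
    · have := Complex.arg_neg_iff.2 hm1α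
      have h2 := Complex.arg_le_pi ((1:ℂ)-β)
      linarith
  have hdiffim_pos : 0 < (α - β).im := by
    rw [Complex.sub_im]; linarith [hw_re]
  have hfinal : Complex.log (α-β) - Complex.log (β-α) = Real.pi * I := by
    have hβα : β - α = -(α-β) := by ring
    have habs : ‖β-α‖ = ‖α-β‖ := by
      rw [hβα]; exact norm_neg _
    have harg : (β-α).arg = (α-β).arg - Real.pi := by
      rw [hβα]; exact Complex.arg_neg_eq_arg_sub_pi_of_im_pos hdiffim_pos
    apply Complex.ext
    · simp only [Complex.sub_re, Complex.log_re, habs, Complex.mul_re, Complex.I_re,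
        Complex.ofReal_re, Complex.I_im, Complex.ofReal_im]
      ring
    · simp only [Complex.sub_im, Complex.log_im, harg, Complex.mul_im, Complex.I_re,
        Complex.ofReal_re, Complex.I_im, Complex.ofReal_im]
      ring
  have hL : Complex.log ((1:ℂ)-α) - Complex.log ((1:ℂ)-β) - Complex.log ((-1:ℂ)-α)
      + Complex.log ((-1:ℂ)-β) = Real.pi * I := by
    linear_combination e1 - e2 + hfinal
  -- the multiplier c
  obtain ⟨c, hc_def⟩ : ∃ t : ℂ, t = -(I*s) := ⟨_, rfl⟩
  have hcL : c * ((Real.pi:ℂ) * I) = (Real.pi:ℂ) * s := by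
    rw [hc_def]
    linear_combination (-(Real.pi:ℂ)*s)*Complex.I_sq
  -- the integrand and its continuity
  obtain ⟨g, hg_def⟩ : ∃ t : ℝ → ℂ,
      t = fun x : ℝ => (Real.sqrt (4 * σ ^ 2 - x ^ 2) : ℂ) / ((x : ℂ) - z) := ⟨_, rfl⟩
  have hne_sub : ∀ x : ℝ, (x:ℂ) - z ≠ 0 := by
    intro x h
    have := congrArg Complex.im h
    simp only [Complex.sub_im, Complex.ofReal_im, Complex.zero_im, zero_sub] at this
    linarith [hz, this]
  have hgcont : Continuous g := by
    rw [hg_def]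
    exact (Complex.continuous_ofReal.comp (Real.continuous_sqrt.comp
      (continuous_const.sub (continuous_pow 2)))).div
      (Complex.continuous_ofReal.sub continuous_const) (fun x => hne_sub x)
  -- substitution x = 2σ sin θ
  have hderiv_sin : ∀ θ ∈ Set.uIcc (-(Real.pi/2)) (Real.pi/2),
      HasDerivAt (fun t : ℝ => 2*σ*Real.sin t) (2*σ*Real.cos θ) θ :=
    fun θ _ => (Real.hasDerivAt_sin θ).const_mul (2*σ)
  have hsub := intervalIntegral.integral_comp_smul_deriv hderiv_sin
    ((continuous_const.mul Real.continuous_cos).continuousOn) hgcont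
  have hlo : 2*σ*Real.sin (-(Real.pi/2)) = -(2*σ) := by
    rw [Real.sin_neg, Real.sin_pi_div_two]; ring
  have hhi : 2*σ*Real.sin (Real.pi/2) = 2*σ := by
    rw [Real.sin_pi_div_two]; ring
  rw [hlo, hhi] at hsub
  -- rewrite the θ-integrand
  obtain ⟨F, hF_def⟩ : ∃ t : ℝ → ℂ, t = fun θ : ℝ => ((2*σ*Real.cos θ : ℝ):ℂ) *
      (((2*σ*Real.cos θ : ℝ):ℂ) / (((2*σ*Real.sin θ : ℝ):ℂ) - z)) := ⟨_, rfl⟩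
  have huIcc : Set.uIcc (-(Real.pi/2)) (Real.pi/2) = Set.Icc (-(Real.pi/2)) (Real.pi/2) :=
    Set.uIcc_of_le (by linarith [Real.pi_pos])
  have hstep1 : (∫ θ in (-(Real.pi/2))..(Real.pi/2),
      (2*σ*Real.cos θ) • (g ∘ (fun t : ℝ => 2*σ*Real.sin t)) θ)
      = ∫ θ in (-(Real.pi/2))..(Real.pi/2), F θ := by
    apply intervalIntegral.integral_congr
    intro θ hθ
    rw [huIcc] at hθ
    have hcosnn : 0 ≤ Real.cos θ := Real.cos_nonneg_of_mem_Icc ⟨hθ.1, hθ.2⟩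
    have hsq : 4*σ^2 - (2*σ*Real.sin θ)^2 = (2*σ*Real.cos θ)^2 := by
      have := Real.sin_sq_add_cos_sq θ; nlinarith
    simp only [Function.comp, hg_def, hF_def]
    rw [hsq, Real.sqrt_sq (mul_nonneg (by positivity) hcosnn), Complex.real_smul]
  -- the antiderivative
  obtain ⟨G, hG_def⟩ : ∃ gg : ℝ → ℂ, gg = fun t : ℝ => ((2*σ*Real.cos t : ℝ):ℂ) - z*(t:ℂ) +
      c * (Complex.log (((Real.tan (t/2) : ℝ):ℂ) - α)
        - Complex.log (((Real.tan (t/2) : ℝ):ℂ) - β)) := ⟨_, rfl⟩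
  have hFcont : Continuous F := by
    rw [hF_def]
    have hA : Continuous (fun θ:ℝ => ((2*σ*Real.cos θ:ℝ):ℂ)) :=
      Complex.continuous_ofReal.comp (continuous_const.mul Real.continuous_cos)
    have hB : Continuous (fun θ:ℝ => ((2*σ*Real.sin θ:ℝ):ℂ) - z) :=
      (Complex.continuous_ofReal.comp (continuous_const.mul Real.continuous_sin)).sub
        continuous_const
    exact hA.mul (hA.div hB (fun θ => hne_sub _))
  have hGderiv : ∀ θ ∈ Set.uIcc (-(Real.pi/2)) (Real.pi/2), HasDerivAt G (F θ) θ := by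
    intro θ hθ
    rw [huIcc] at hθ
    have hpi := Real.pi_pos
    have hθ2 : θ/2 ∈ Set.Ioo (-(Real.pi/2)) (Real.pi/2) := by
      rw [Set.mem_Ioo]
      constructor <;> [linarith [hθ.1]; linarith [hθ.2]]
    have hch_pos : 0 < Real.cos (θ/2) := Real.cos_pos_of_mem_Ioo hθ2
    have hch : Real.cos (θ/2) ≠ 0 := ne_of_gt hch_pos
    have h1 : HasDerivAt (fun t : ℝ => t/2) (1/2) θ := by
      simpa using (hasDerivAt_id θ).div_const 2
    have htand : HasDerivAt (fun t : ℝ => Real.tan (t/2)) (1/Real.cos (θ/2)^2 * (1/2)) θ := by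
      simpa [Function.comp_def] using (Real.hasDerivAt_tan hch).comp θ h1
    have htandC : HasDerivAt (fun t : ℝ => ((Real.tan (t/2) : ℝ):ℂ))
        (((1/Real.cos (θ/2)^2 * (1/2) : ℝ)):ℂ) θ := htand.ofReal_comp
    have hslitα : ((Real.tan (θ/2) : ℝ):ℂ) - α ∈ Complex.slitPlane := by
      rw [Complex.mem_slitPlane_iff]
      right
      simp only [Complex.sub_im, Complex.ofReal_im, zero_sub, ne_eq, neg_eq_zero]
      exact hαim_ne
    have hslitβ : ((Real.tan (θ/2) : ℝ):ℂ) - β ∈ Complex.slitPlane := by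
      rw [Complex.mem_slitPlane_iff]
      right
      simp only [Complex.sub_im, Complex.ofReal_im, zero_sub, ne_eq, neg_eq_zero]
      exact ne_of_lt hβim_neg
    have hlogα := (htandC.sub_const α).clog_real hslitα
    have hlogβ := (htandC.sub_const β).clog_real hslitβ
    have hcosC : HasDerivAt (fun t : ℝ => ((2*σ*Real.cos t : ℝ):ℂ))
        (((2*σ*(-Real.sin θ) : ℝ)):ℂ) θ := ((Real.hasDerivAt_cos θ).const_mul (2*σ)).ofReal_comp
    have hid : HasDerivAt (fun t : ℝ => (t:ℂ)) 1 θ := by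
      simpa using (hasDerivAt_id θ).ofReal_comp
    have hzθ : HasDerivAt (fun t : ℝ => z*(t:ℂ)) z θ := by
      simpa using hid.const_mul z
    have total := (hcosC.sub hzθ).add ((hlogα.sub hlogβ).const_mul c)
    have hVF : (((2*σ*(-Real.sin θ) : ℝ)):ℂ) - z +
        c * ((((1/Real.cos (θ/2)^2 * (1/2) : ℝ)):ℂ) / (((Real.tan (θ/2) : ℝ):ℂ) - α)
          - (((1/Real.cos (θ/2)^2 * (1/2) : ℝ)):ℂ) / (((Real.tan (θ/2) : ℝ):ℂ) - β)) = F θ := by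
      -- the core algebraic identity
      have hchC : ((Real.cos (θ/2) : ℝ):ℂ) ≠ 0 := Complex.ofReal_ne_zero.2 hch
      have hpyC : ((Real.sin (θ/2) : ℝ):ℂ)^2 + ((Real.cos (θ/2) : ℝ):ℂ)^2 = 1 := by
        exact_mod_cast Real.sin_sq_add_cos_sq (θ/2)
      have hj2' : (I*s)^2 = 4*(σ:ℂ)^2 - z^2 := by
        linear_combination s^2*Complex.I_sq - hs2
      have htanθ : Real.tan (θ/2) = Real.sin (θ/2)/Real.cos (θ/2) := Real.tan_eq_sin_div_cos _
      have hαform : ((Real.sin (θ/2) : ℝ):ℂ)/((Real.cos (θ/2) : ℝ):ℂ) - (2*(σ:ℂ) + I*s)/z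
          = ((Real.tan (θ/2) : ℝ):ℂ) - α := by
        rw [hα_def, htanθ]
        push_cast
        ring
      have hβform : ((Real.sin (θ/2) : ℝ):ℂ)/((Real.cos (θ/2) : ℝ):ℂ) - (2*(σ:ℂ) - I*s)/z
          = ((Real.tan (θ/2) : ℝ):ℂ) - β := by
        rw [hβ_def, htanθ]
        push_cast
        ring
      have hαne' : ((Real.sin (θ/2) : ℝ):ℂ)/((Real.cos (θ/2) : ℝ):ℂ) - (2*(σ:ℂ) + I*s)/z ≠ 0 := by
        rw [hαform]
        apply him_ne
        simp only [Complex.sub_im, Complex.ofReal_im, zero_sub, ne_eq, neg_eq_zero]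
        exact hαim_ne
      have hβne' : ((Real.sin (θ/2) : ℝ):ℂ)/((Real.cos (θ/2) : ℝ):ℂ) - (2*(σ:ℂ) - I*s)/z ≠ 0 := by
        rw [hβform]
        apply him_ne
        simp only [Complex.sub_im, Complex.ofReal_im, zero_sub, ne_eq, neg_eq_zero]
        exact ne_of_lt hβim_neg
      have hdenne' : 2*(σ:ℂ)*(2*((Real.sin (θ/2) : ℝ):ℂ)*((Real.cos (θ/2) : ℝ):ℂ)) - z ≠ 0 := by
        have heq : 2*(σ:ℂ)*(2*((Real.sin (θ/2) : ℝ):ℂ)*((Real.cos (θ/2) : ℝ):ℂ)) - z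
            = ((2*σ*(2*Real.sin (θ/2)*Real.cos (θ/2)) : ℝ):ℂ) - z := by
          push_cast; ring
        rw [heq]
        exact hne_sub _
      have halg := semicircle_core_alg z (I*s) ((Real.sin (θ/2) : ℝ):ℂ)
        ((Real.cos (θ/2) : ℝ):ℂ) ((σ:ℝ):ℂ) hz0 hchC hj2' hpyC hαne' hβne' hdenne'
      have hsinθ : Real.sin θ = 2*Real.sin (θ/2)*Real.cos (θ/2) := by
        rw [← Real.sin_two_mul]; congr 1; ring
      have hcosθ : Real.cos θ = 2*Real.cos (θ/2)^2 - 1 := by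
        rw [← Real.cos_two_mul]; congr 1; ring
      rw [hF_def]
      simp only [hsinθ, hcosθ, htanθ, hα_def, hβ_def, hc_def]
      push_cast at halg ⊢
      linear_combination -halg
    rw [hG_def]
    exact hVF ▸ ((hcosC.sub hzθ).add ((hlogα.sub hlogβ).const_mul c))
  have hFTC : (∫ θ in (-(Real.pi/2))..(Real.pi/2), F θ) = G (Real.pi/2) - G (-(Real.pi/2)) :=
    intervalIntegral.integral_eq_sub_of_hasDerivAt hGderiv (hFcont.intervalIntegrable _ _)
  -- endpoint values
  have e_hi : G (Real.pi/2) = -(z*((Real.pi:ℂ)/2)) +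
      c*(Complex.log ((1:ℂ)-α) - Complex.log ((1:ℂ)-β)) := by
    simp only [hG_def]
    rw [show Real.pi/2/2 = Real.pi/4 by ring, Real.tan_pi_div_four, Real.cos_pi_div_two]
    push_cast
    ring
  have e_lo : G (-(Real.pi/2)) = z*((Real.pi:ℂ)/2) +
      c*(Complex.log ((-1:ℂ)-α) - Complex.log ((-1:ℂ)-β)) := by
    simp only [hG_def]
    rw [show -(Real.pi/2)/2 = -(Real.pi/4) by ring, Real.tan_neg, Real.tan_pi_div_four,
      Real.cos_neg, Real.cos_pi_div_two]
    push_cast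
    ring
  have hIval : (∫ x in (-(2*σ))..(2*σ), g x) = (Real.pi:ℂ)*(s-z) := by
    rw [← hsub, hstep1, hFTC, e_hi, e_lo]
    linear_combination c*hL + hcL
  rw [hg_def] at hIval
  rw [← hu_def2, ← hw_def]
  simp only [] at hIval
  rw [hIval, hs_def]
  have hσC : (σ:ℂ) ≠ 0 := Complex.ofReal_ne_zero.2 (ne_of_gt hσ)
  have hπC : ((Real.pi:ℝ):ℂ) ≠ 0 := Complex.ofReal_ne_zero.2 Real.pi_ne_zero
  field_simp
end

section
/- The Stieltjes transform f_μ of the Wigner semicircle law with parameter σ satisfies the quadratic equation σ² f_μ(z)² + z f_μ(z) + 1 = 0 for all z with Im z ≠ 0. -/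
open Complex MeasureTheory

private lemma arg_sub_abs_lt {u w : ℂ} (hu : u.im ≠ 0) (he : w.im = u.im) :
    |u.arg - w.arg| < Real.pi := by
  have hw : w.im ≠ 0 := by rw [he]; exact hu
  have h1 : u.arg < Real.pi := Complex.arg_lt_pi_iff.2 (Or.inr hu)
  have h2 : w.arg < Real.pi := Complex.arg_lt_pi_iff.2 (Or.inr hw)
  have h3 := Complex.neg_pi_lt_arg u
  have h4 := Complex.neg_pi_lt_arg w
  rcases lt_or_gt_of_ne hu with h | h
  · have hu' : u.arg < 0 := Complex.arg_neg_iff.2 h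
    have hw' : w.arg < 0 := Complex.arg_neg_iff.2 (by rw [he]; exact h)
    rw [abs_lt]; constructor <;> linarith
  · have hu' : 0 ≤ u.arg := Complex.arg_nonneg_iff.2 h.le
    have hw' : 0 ≤ w.arg := Complex.arg_nonneg_iff.2 (by rw [he]; exact h.le)
    rw [abs_lt]; constructor <;> linarith

private lemma step1 {z v A t : ℂ} (hz : z ≠ 0) (hv0 : v ≠ 0) (hv : v ^ 2 = A ^ 2 - z ^ 2)
    (hq : z * t ^ 2 - 2 * A * t + z ≠ 0) :
    (-1 / v) * ((t - (A + v) / z)⁻¹ - (t - (A - v) / z)⁻¹)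
      = -2 / (z * t ^ 2 - 2 * A * t + z) := by
  have hprod : (t - (A + v) / z) * (t - (A - v) / z) = (z * t ^ 2 - 2 * A * t + z) / z := by
    field_simp
    linear_combination -hv
  have h1 : t - (A + v) / z ≠ 0 := by
    intro h
    apply hq
    have h2 : (t - (A + v) / z) * (t - (A - v) / z) = 0 := by rw [h]; ring
    rw [hprod, div_eq_zero_iff] at h2
    tauto
  have h2 : t - (A - v) / z ≠ 0 := by
    intro h
    apply hq
    have h2 : (t - (A + v) / z) * (t - (A - v) / z) = 0 := by rw [h]; ring
    rw [hprod, div_eq_zero_iff] at h2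
    tauto
  rw [inv_sub_inv h1 h2, hprod]
  field_simp
  ring

set_option maxHeartbeats 2000000 in
/-- The Stieltjes transform of the Wigner semicircle law satisfies the quadratic
equation `σ² f(z)² + z f(z) + 1 = 0` off the real axis. -/
theorem semicircle_stieltjes_quadratic (σ : ℝ) (hσ : 0 < σ)
    (f : ℂ → ℂ)
    (hf : ∀ z : ℂ, z.im ≠ 0 →
      f z = (1 / (2 * Real.pi * σ ^ 2) : ℂ) *
        ∫ x in (-(2 * σ))..(2 * σ), (Real.sqrt (4 * σ ^ 2 - x ^ 2) : ℂ) / ((x : ℂ) - z))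
    (z : ℂ) (hz : z.im ≠ 0) :
    (σ : ℂ) ^ 2 * f z ^ 2 + z * f z + 1 = 0 := by
  have hπ0 : (0:ℝ) < Real.pi := Real.pi_pos
  have hπc : (Real.pi : ℂ) ≠ 0 := by exact_mod_cast Real.pi_ne_zero
  have hσc : (σ : ℂ) ≠ 0 := by exact_mod_cast hσ.ne'
  have hz0 : z ≠ 0 := by intro h; exact hz (by simp [h])
  have hxz : ∀ x : ℝ, (x : ℂ) - z ≠ 0 := by
    intro x h
    apply hz
    have := congrArg Complex.im h
    simpa using this.symm
  -- the constant C = 4σ² - z²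
  have hC0 : 4 * (σ:ℂ) ^ 2 - z ^ 2 ≠ 0 := by
    intro h
    have hsq : z ^ 2 = 4 * (σ:ℂ) ^ 2 := by linear_combination -h
    have h1 : z.re * z.im + z.im * z.re = 0 := by
      have := congrArg Complex.im hsq
      simpa [pow_two, Complex.mul_im] using this
    have h2 : z.re * z.re - z.im * z.im = 4 * σ ^ 2 := by
      have := congrArg Complex.re hsq
      simpa [pow_two, Complex.mul_re] using this
    have hre : z.re = 0 := by
      rcases mul_eq_zero.mp (by linarith : z.re * z.im = 0) with h | h
      · exact h
      · exact absurd h hz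
    nlinarith [sq_nonneg z.im, mul_pos hσ hσ]
  obtain ⟨v, hv⟩ : ∃ v : ℂ, v ^ 2 = 4 * (σ:ℂ) ^ 2 - z ^ 2 :=
    IsAlgClosed.exists_pow_nat_eq _ two_pos
  have hv' : v ^ 2 = (2*(σ:ℂ)) ^ 2 - z ^ 2 := by rw [hv]; ring
  have hv0 : v ≠ 0 := by
    intro h; rw [h] at hv; exact hC0 (by linear_combination -hv)
  set t₁ : ℂ := (2*(σ:ℂ) + v) / z with ht₁def
  set t₂ : ℂ := (2*(σ:ℂ) - v) / z with ht₂def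
  have hroot_im : ∀ t : ℂ, z * t ^ 2 - 2 * (2*(σ:ℂ)) * t + z = 0 → t.im ≠ 0 := by
    intro t hroot h0
    have hr : ((t.re : ℝ) : ℂ) = t := Complex.ext (by simp) (by simp [h0])
    set r := t.re with hrdef
    rw [← hr] at hroot
    have him := congrArg Complex.im hroot
    simp [pow_two, Complex.mul_im, Complex.mul_re, Complex.add_im, Complex.sub_im] at him
    apply hz
    nlinarith [sq_nonneg r, sq_nonneg (r - 1), sq_nonneg (r + 1)]
  have hroot1 : z * t₁ ^ 2 - 2 * (2*(σ:ℂ)) * t₁ + z = 0 := by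
    rw [ht₁def]; field_simp; linear_combination hv
  have hroot2 : z * t₂ ^ 2 - 2 * (2*(σ:ℂ)) * t₂ + z = 0 := by
    rw [ht₂def]; field_simp; linear_combination hv
  have ht₁im : t₁.im ≠ 0 := hroot_im t₁ hroot1
  have ht₂im : t₂.im ≠ 0 := hroot_im t₂ hroot2
  -- the integrand
  set g : ℝ → ℂ := fun x => (Real.sqrt (4 * σ ^ 2 - x ^ 2) : ℂ) / ((x : ℂ) - z) with hgdef
  have hgc : Continuous g := by
    apply Continuous.div
    · exact Complex.continuous_ofReal.comp
        (Real.continuous_sqrt.comp (continuous_const.sub (continuous_pow 2)))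
    · exact Complex.continuous_ofReal.sub continuous_const
    · exact fun x => hxz x
  -- the antiderivative
  set G : ℝ → ℂ := fun θ => 2*(σ:ℂ) * (Real.cos θ : ℂ) - z * (θ : ℂ) +
      (4 * (σ:ℂ) ^ 2 - z ^ 2) * ((-1/v) *
        (Complex.log ((Real.tan (θ/2) : ℂ) - t₁) - Complex.log ((Real.tan (θ/2) : ℂ) - t₂)))
    with hGdef
  have hderiv : ∀ θ ∈ Set.uIcc (-(Real.pi/2)) (Real.pi/2),
      HasDerivAt G ((2*σ*Real.cos θ) • g (2*σ*Real.sin θ)) θ := by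
    intro θ hθ
    rw [Set.uIcc_of_le (by linarith)] at hθ
    obtain ⟨hθ1, hθ2⟩ := hθ
    have hc2 : 0 < Real.cos (θ/2) := Real.cos_pos_of_mem_Ioo ⟨by linarith, by linarith⟩
    have hcos : 0 ≤ Real.cos θ := Real.cos_nonneg_of_mem_Icc ⟨hθ1, hθ2⟩
    set sθ : ℝ := Real.sin θ with hsθdef
    set cθ : ℝ := Real.cos θ with hcθdef
    set sr : ℝ := Real.sin (θ/2) with hsrdef
    set cr : ℝ := Real.cos (θ/2) with hcrdef
    have hc2c : ((cr : ℝ) : ℂ) ≠ 0 := by exact_mod_cast hc2.ne'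
    set t : ℝ := Real.tan (θ/2) with htdef
    have htsc : t = sr / cr := by rw [htdef, Real.tan_eq_sin_div_cos, ← hsrdef, ← hcrdef]
    have hsin2 : sθ = 2 * sr * cr := by
      rw [hsθdef, show θ = 2*(θ/2) by ring, Real.sin_two_mul, ← hsrdef, ← hcrdef]
    have hs : ((sr : ℝ) : ℂ)^2 + ((cr : ℝ) : ℂ)^2 = 1 := by
      exact_mod_cast congrArg (fun r : ℝ => (r : ℂ))
        (by rw [hsrdef, hcrdef]; exact Real.sin_sq_add_cos_sq (θ/2))
    have hsc : ((sθ : ℝ) : ℂ)^2 + ((cθ : ℝ) : ℂ)^2 = 1 := by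
      exact_mod_cast congrArg (fun r : ℝ => (r : ℂ))
        (by rw [hsθdef, hcθdef]; exact Real.sin_sq_add_cos_sq θ)
    have hqc : (z * (t:ℂ)^2 - 2*(2*(σ:ℂ))*(t:ℂ) + z) * ((cr : ℝ) : ℂ)^2
        = z - ((2*σ*sθ : ℝ) : ℂ) := by
      rw [htsc, hsin2]
      push_cast
      field_simp
      linear_combination z*hs
    have hSz : ((2*σ*sθ : ℝ) : ℂ) - z ≠ 0 := hxz _
    have hq0 : z * (t:ℂ)^2 - 2*(2*(σ:ℂ))*(t:ℂ) + z ≠ 0 := by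
      intro h
      apply hSz
      have := hqc
      rw [h, zero_mul] at this
      linear_combination this
    -- derivative of the logarithmic part
    have l1 : HasDerivAt (fun u : ℝ => Complex.log ((u:ℂ) - t₁)) (((t:ℂ) - t₁)⁻¹) t := by
      have inner : HasDerivAt (fun w : ℂ => w - t₁) 1 ((t:ℂ)) := (hasDerivAt_id _).sub_const _
      have hmem : ((t:ℂ) - t₁) ∈ Complex.slitPlane := by
        rw [Complex.mem_slitPlane_iff]
        exact Or.inr (by simpa using neg_ne_zero.2 ht₁im)
      have outer := Complex.hasDerivAt_log hmem
      simpa using (outer.comp ((t:ℂ)) inner).comp_ofReal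
    have l2 : HasDerivAt (fun u : ℝ => Complex.log ((u:ℂ) - t₂)) (((t:ℂ) - t₂)⁻¹) t := by
      have inner : HasDerivAt (fun w : ℂ => w - t₂) 1 ((t:ℂ)) := (hasDerivAt_id _).sub_const _
      have hmem : ((t:ℂ) - t₂) ∈ Complex.slitPlane := by
        rw [Complex.mem_slitPlane_iff]
        exact Or.inr (by simpa using neg_ne_zero.2 ht₂im)
      have outer := Complex.hasDerivAt_log hmem
      simpa using (outer.comp ((t:ℂ)) inner).comp_ofReal
    have hHc : HasDerivAt
        (fun u : ℝ => (-1/v) * (Complex.log ((u:ℂ) - t₁) - Complex.log ((u:ℂ) - t₂)))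
        ((-1/v) * (((t:ℂ) - t₁)⁻¹ - ((t:ℂ) - t₂)⁻¹)) t := (l1.sub l2).const_mul _
    have htan : HasDerivAt (fun x : ℝ => Real.tan (x/2)) (1 / cr^2 * (1/2)) θ := by
      rw [hcrdef]
      exact (Real.hasDerivAt_tan hc2.ne').comp θ ((hasDerivAt_id θ).div_const 2)
    have hcomp : HasDerivAt
        (fun x : ℝ => (-1/v) * (Complex.log ((Real.tan (x/2) : ℂ)  - t₁)
          - Complex.log ((Real.tan (x/2) : ℂ) - t₂)))
        ((1 / cr^2 * (1/2)) • ((-1/v) * (((t:ℂ) - t₁)⁻¹ - ((t:ℂ) - t₂)⁻¹))) θ :=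
      by have := HasDerivAt.scomp θ hHc htan; exact this
    have h1 : HasDerivAt (fun x : ℝ => 2*(σ:ℂ) * (Real.cos x : ℂ))
        (2*(σ:ℂ) * ((-sθ : ℝ) : ℂ)) θ := by
      rw [hsθdef]
      exact ((Real.hasDerivAt_cos θ).ofReal_comp).const_mul _
    have h2 : HasDerivAt (fun x : ℝ => z * (x:ℂ)) z θ := by
      simpa using ((hasDerivAt_id θ).ofReal_comp).const_mul z
    have total : HasDerivAt G
        (2*(σ:ℂ) * ((-sθ : ℝ) : ℂ) - z +
          (4 * (σ:ℂ) ^ 2 - z ^ 2) *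
            ((1 / cr^2 * (1/2)) • ((-1/v) * (((t:ℂ) - t₁)⁻¹ - ((t:ℂ) - t₂)⁻¹)))) θ := by
      rw [hGdef]
      exact (h1.sub h2).add (hcomp.const_mul _)
    convert total using 1
    rw [ht₁def, ht₂def, step1 hz0 hv0 hv' hq0]
    have hsqrt : Real.sqrt (4*σ^2 - (2*σ*sθ)^2) = 2*σ*cθ := by
      rw [show 4*σ^2 - (2*σ*sθ)^2 = (2*σ*cθ)^2 by
        have h := Real.sin_sq_add_cos_sq θ
        rw [← hsθdef, ← hcθdef] at h
        nlinarith]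
      exact Real.sqrt_sq (mul_nonneg (by positivity) hcos)
    rw [hgdef]
    simp only [hsqrt, Complex.real_smul]
    have hstep2 : ((1 / cr^2 * (1/2) : ℝ) : ℂ)
          * (-2/(z*(t:ℂ)^2 - 2*(2*(σ:ℂ))*(t:ℂ) + z))
        = (((2*σ*sθ : ℝ) : ℂ) - z)⁻¹ := by
      refine eq_inv_of_mul_eq_one_left ?_
      have hqc' := hqc
      push_cast at hqc' ⊢
      have hC : (2*(σ:ℂ)*(sθ:ℂ) - z) = -((z * (t:ℂ)^2 - 2*(2*(σ:ℂ))*(t:ℂ) + z) * (cr:ℂ)^2) := by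
        linear_combination hqc'
      rw [hC]
      field_simp
      exact div_self (by intro h; apply hq0; linear_combination h)
    rw [hstep2]
    have hSz' : 2*(σ:ℂ)*((sθ:ℝ):ℂ) - z ≠ 0 := by
      intro h; apply hSz; push_cast; linear_combination h
    push_cast
    field_simp [hSz']
    linear_combination (4*(σ:ℂ)^2) * hsc
  have hint : IntervalIntegrable (fun θ => (2*σ*Real.cos θ) • g (2*σ*Real.sin θ))
      volume (-(Real.pi/2)) (Real.pi/2) := by
    apply Continuous.intervalIntegrable
    exact (continuous_const.mul Real.continuous_cos).smul
      (hgc.comp (continuous_const.mul Real.continuous_sin))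
  have hsub : (∫ x in (-(2*σ))..(2*σ), g x)
      = ∫ θ in (-(Real.pi/2))..(Real.pi/2), (2*σ*Real.cos θ) • g (2*σ*Real.sin θ) := by
    have h := intervalIntegral.integral_comp_smul_deriv
      (f := fun θ : ℝ => 2*σ*Real.sin θ) (f' := fun θ : ℝ => 2*σ*Real.cos θ)
      (g := g) (a := -(Real.pi/2)) (b := Real.pi/2)
      (fun x _ => ((Real.hasDerivAt_sin x).const_mul (2*σ)))
      (continuous_const.mul Real.continuous_cos).continuousOn hgc
    simp only [Function.comp] at h
    rw [show (2:ℝ)*σ*Real.sin (-(Real.pi/2)) = -(2*σ) by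
          norm_num [Real.sin_pi_div_two],
        show (2:ℝ)*σ*Real.sin (Real.pi/2) = 2*σ by norm_num [Real.sin_pi_div_two]] at h
    exact h.symm
  set L : ℂ := (Complex.log (1 - t₁) - Complex.log (1 - t₂)) -
      (Complex.log (-1 - t₁) - Complex.log (-1 - t₂)) with hLdef
  have hIval : (∫ x in (-(2*σ))..(2*σ), g x)
      = -(Real.pi:ℂ) * z + (4 * (σ:ℂ) ^ 2 - z ^ 2) * ((-1/v) * L) := by
    rw [hsub, intervalIntegral.integral_eq_sub_of_hasDerivAt hderiv hint]
    rw [hGdef]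
    have e1 : (Real.pi/2)/2 = Real.pi/4 := by ring
    have e2 : (-(Real.pi/2))/2 = -(Real.pi/4) := by ring
    simp only [e1, e2, Real.tan_pi_div_four, Real.tan_neg, Real.cos_pi_div_two,
      Real.cos_neg]
    push_cast
    rw [hLdef]
    ring
  -- branch control : L² = -π²
  have hL2 : L ^ 2 = -(Real.pi:ℂ) ^ 2 := by
    have him1 : ((1:ℂ) - t₁).im ≠ 0 := by simpa using neg_ne_zero.2 ht₁im
    have him2 : ((1:ℂ) - t₂).im ≠ 0 := by simpa using neg_ne_zero.2 ht₂im
    have him3 : ((-1:ℂ) - t₁).im ≠ 0 := by simpa using neg_ne_zero.2 ht₁im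
    have him4 : ((-1:ℂ) - t₂).im ≠ 0 := by simpa using neg_ne_zero.2 ht₂im
    have hnz : ∀ u : ℂ, u.im ≠ 0 → u ≠ 0 := fun u hu h => hu (by simp [h])
    have hprod12 : t₁ * t₂ = 1 := by
      rw [ht₁def, ht₂def]; field_simp; linear_combination -hv
    have hexp : Complex.exp L = -1 := by
      rw [hLdef, Complex.exp_sub, Complex.exp_sub, Complex.exp_sub,
        Complex.exp_log (hnz _ him1), Complex.exp_log (hnz _ him2),
        Complex.exp_log (hnz _ him3), Complex.exp_log (hnz _ him4)]
      field_simp [hnz _ him2, hnz _ him3, hnz _ him4]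
      linear_combination 2*hprod12
    obtain ⟨n, hn⟩ := Complex.exp_eq_exp_iff_exists_int.mp
      (show Complex.exp L = Complex.exp ((Real.pi : ℂ) * Complex.I) by
        rw [hexp, Complex.exp_pi_mul_I])
    have him : L.im = Real.pi + n * (2 * Real.pi) := by
      rw [hn]; simp [Complex.add_im, Complex.mul_im]
    have himL : L.im = (((1:ℂ) - t₁).arg - ((-1:ℂ) - t₁).arg)
        + (((-1:ℂ) - t₂).arg - ((1:ℂ) - t₂).arg) := by
      rw [hLdef]
      simp only [Complex.sub_im, Complex.log_im]
      ring
    have b1 : |((1:ℂ) - t₁).arg - ((-1:ℂ) - t₁).arg| < Real.pi :=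
      arg_sub_abs_lt him1 (by simp)
    have b2 : |((-1:ℂ) - t₂).arg - ((1:ℂ) - t₂).arg| < Real.pi :=
      arg_sub_abs_lt him4 (by simp)
    have hbound : |L.im| < 2 * Real.pi := by
      rw [himL]
      calc |(((1:ℂ) - t₁).arg - ((-1:ℂ) - t₁).arg) + (((-1:ℂ) - t₂).arg - ((1:ℂ) - t₂).arg)|
          ≤ |((1:ℂ) - t₁).arg - ((-1:ℂ) - t₁).arg| + |((-1:ℂ) - t₂).arg - ((1:ℂ) - t₂).arg| :=
            abs_add_le _ _
        _ < 2 * Real.pi := by linarith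
    have hn' : n = 0 ∨ n = -1 := by
      rw [him, abs_lt] at hbound
      obtain ⟨hb1, hb2⟩ := hbound
      have h1 : (-2:ℝ) < 2*(n:ℝ)+1 := by nlinarith
      have h2 : (2*(n:ℝ)+1) < 2 := by nlinarith
      have h1' : (-2:ℤ) < 2*n+1 := by exact_mod_cast h1
      have h2' : (2*n+1:ℤ) < 2 := by exact_mod_cast h2
      omega
    rcases hn' with h | h <;> rw [h] at hn <;> rw [hn] <;> push_cast <;>
      linear_combination (Real.pi:ℂ)^2 * Complex.I_sq
  -- assemble
  have hW : ((4 * (σ:ℂ) ^ 2 - z ^ 2) * ((-1/v) * L)) ^ 2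
      = (Real.pi:ℂ) ^ 2 * (z ^ 2 - 4 * (σ:ℂ) ^ 2) := by
    have h1 : ((4 * (σ:ℂ) ^ 2 - z ^ 2) * ((-1/v) * L)) ^ 2
        = (4 * (σ:ℂ) ^ 2 - z ^ 2) ^ 2 * L ^ 2 / v ^ 2 := by
      field_simp
    rw [h1, hv, hL2]
    field_simp [hC0]
    ring
  obtain ⟨W, hWeq, hW2⟩ : ∃ W : ℂ, (∫ x in (-(2*σ))..(2*σ), g x) = -(Real.pi:ℂ) * z + W ∧
      W ^ 2 = (Real.pi:ℂ)^2 * (z^2 - 4*(σ:ℂ)^2) := ⟨_, hIval, hW⟩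
  rw [hf z hz, hWeq]
  field_simp
  linear_combination hW2
end

section
/- For integers K, J and r > 0, (1/(4π²)) ∮_{|z₁|=r} ∮_{|z₂|=r} ((z₁^K - z₂^K)/(z₁-z₂)) · ((z₁^J - z₂^J)/(z₁-z₂)) dz₁ dz₂ equals |K| if K = -J and 0 otherwise. -/
open Complex

namespace DCIDP

open Metric Finset MeasureTheory

noncomputable def eps (K : ℤ) : ℂ := if 0 ≤ K then 1 else -1

def pexp (K : ℤ) (j : ℕ) : ℤ := if 0 ≤ K then j else j + K

def qexp (K : ℤ) (j : ℕ) : ℤ := if 0 ≤ K then K - 1 - j else -1 - j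

lemma pexp_add_qexp (K : ℤ) (j : ℕ) : pexp K j + qexp K j = K - 1 := by
  unfold pexp qexp; split <;> ring

lemma eps_mul_eps_neg {K : ℤ} (hK : K ≠ 0) : eps K * eps (-K) = -1 := by
  unfold eps
  split_ifs with h1 h2 h2 <;> norm_num <;> omega

lemma q_cond (K : ℤ) (j i : ℕ) :
    (qexp K j + qexp (-K) i = -1) ↔ ((j:ℤ) + (i:ℤ) = (K.natAbs : ℤ) - 1) := by
  unfold qexp
  split_ifs <;> omega

lemma dd_eq (K : ℤ) {z₁ z₂ : ℂ} (h1 : z₁ ≠ 0) (h2 : z₂ ≠ 0) (h12 : z₁ ≠ z₂) :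
    (z₁ ^ K - z₂ ^ K) / (z₁ - z₂)
      = eps K * ∑ j ∈ range K.natAbs, z₁ ^ pexp K j * z₂ ^ qexp K j := by
  rw [div_eq_iff (sub_ne_zero.2 h12)]
  obtain ⟨n, rfl | rfl⟩ := K.eq_nat_or_neg
  · have hnn : (0:ℤ) ≤ (n:ℤ) := Int.natCast_nonneg n
    simp only [eps, pexp, qexp, if_pos hnn, Int.natAbs_natCast, one_mul]
    have key : ∀ j ∈ range n, z₁ ^ (j:ℤ) * z₂ ^ ((n:ℤ) - 1 - (j:ℤ))
        = z₁ ^ j * z₂ ^ (n - 1 - j) := by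
      intro j hj
      have hj' := mem_range.mp hj
      rw [show ((n:ℤ) - 1 - (j:ℤ)) = ((n - 1 - j : ℕ) : ℤ) by omega, zpow_natCast, zpow_natCast]
    rw [Finset.sum_congr rfl key, geom_sum₂_mul, zpow_natCast, zpow_natCast]
  · rcases Nat.eq_zero_or_pos n with rfl | hn
    · simp
    have hneg : ¬ (0:ℤ) ≤ -(n:ℤ) := by omega
    simp only [eps, pexp, qexp, if_neg hneg, Int.natAbs_neg, Int.natAbs_natCast]
    have key : ∀ j ∈ range n, z₁ ^ ((j:ℤ) + -(n:ℤ)) * z₂ ^ (-1 - (j:ℤ))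
        = (z₁ ^ (-(n:ℤ)) * z₂ ^ (-(n:ℤ))) * (z₁ ^ j * z₂ ^ (n - 1 - j)) := by
      intro j hj
      have hj' := mem_range.mp hj
      rw [show (-1 - (j:ℤ)) = ((n - 1 - j : ℕ) : ℤ) + -(n:ℤ) by omega,
        zpow_add₀ h1, zpow_add₀ h2, zpow_natCast, zpow_natCast]
      ring
    rw [Finset.sum_congr rfl key, ← Finset.mul_sum]
    have hg := geom_sum₂_mul z₁ z₂ n
    have h1n : z₁ ^ n ≠ 0 := pow_ne_zero _ h1
    have h2n : z₂ ^ n ≠ 0 := pow_ne_zero _ h2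
    rw [zpow_neg, zpow_neg, zpow_natCast, zpow_natCast]
    field_simp
    linear_combination hg

lemma circleIntegral_zpow {r : ℝ} (hr : 0 < r) (m : ℤ) :
    (∮ z in C(0, r), z ^ m) = if m = -1 then 2 * Real.pi * I else 0 := by
  split_ifs with h
  · subst h
    have h0 : (0:ℂ) ∈ ball (0:ℂ) r := by simpa using hr
    have := circleIntegral.integral_sub_inv_of_mem_ball h0
    simpa [zpow_neg_one] using this
  · have := circleIntegral.integral_sub_zpow_of_ne h 0 0 r
    simpa using this

lemma circleIntegrable_const_mul_zpow {r : ℝ} (hr : 0 < r) (a : ℂ) (m : ℤ) :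
    CircleIntegrable (fun z => a * z ^ m) 0 r := by
  apply ContinuousOn.circleIntegrable hr.le
  apply continuousOn_const.mul
  apply ContinuousOn.zpow₀ continuousOn_id m
  intro z hz
  left
  rw [mem_sphere_zero_iff_norm] at hz
  intro h0
  simp only [id_eq] at h0
  exact hr.ne' (by rw [← hz, h0, norm_zero])

lemma circleIntegrable_finset_sum {ι : Type*} (s : Finset ι) (f : ι → ℂ → ℂ) {c : ℂ} {R : ℝ}
    (h : ∀ i ∈ s, CircleIntegrable (f i) c R) :
    CircleIntegrable (fun z => ∑ i ∈ s, f i z) c R := by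
  classical
  induction s using Finset.induction with
  | empty => simpa using circleIntegrable_const (0:ℂ) c R
  | @insert a s ha ih =>
      simp only [Finset.sum_insert ha]
      exact (h _ (mem_insert_self _ _)).add (ih fun i hi' => h i (mem_insert_of_mem hi'))

lemma circleIntegral_finset_sum {ι : Type*} (s : Finset ι) (f : ι → ℂ → ℂ) {c : ℂ} {R : ℝ}
    (h : ∀ i ∈ s, CircleIntegrable (f i) c R) :
    (∮ z in C(c, R), ∑ i ∈ s, f i z) = ∑ i ∈ s, ∮ z in C(c, R), f i z := by
  simp only [circleIntegral, Finset.smul_sum]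
  rw [intervalIntegral.integral_finset_sum]
  exact fun i hi => (h i hi).out

lemma circleIntegral_congr_ae {f g : ℂ → ℂ} {c : ℂ} {R : ℝ} (hR : R ≠ 0) {s : Set ℂ}
    (hs : s.Countable) (h : ∀ z ∉ s, f z = g z) :
    (∮ z in C(c, R), f z) = ∮ z in C(c, R), g z := by
  have hc : (circleMap c R ⁻¹' s).Countable := hs.preimage_circleMap c hR
  refine intervalIntegral.integral_congr_ae ((hc.ae_notMem _).mono fun θ hθ _ => ?_)
  simp only [h _ hθ]

lemma count_sum (k : ℕ) :
    ∑ j ∈ range k, ∑ i ∈ range k, (if (j:ℤ) + (i:ℤ) = (k:ℤ) - 1 then (1:ℂ) else 0) = k := by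
  have key : ∀ j ∈ range k,
      ∑ i ∈ range k, (if (j:ℤ) + (i:ℤ) = (k:ℤ) - 1 then (1:ℂ) else 0) = 1 := by
    intro j hj
    have hj' := mem_range.mp hj
    rw [Finset.sum_eq_single (k - 1 - j)]
    · rw [if_pos (by omega)]
    · intro i hi hne
      have hi' := mem_range.mp hi
      rw [if_neg (by omega)]
    · intro hmem; exact absurd (mem_range.mpr (by omega)) hmem
  rw [Finset.sum_congr rfl key]
  simp

end DCIDP

open DCIDP Metric Finset MeasureTheory in
/-- Double contour integral of products of divided differences of powers:
`(1/4π²) ∮∮ ((z₁^K-z₂^K)/(z₁-z₂))((z₁^J-z₂^J)/(z₁-z₂)) dz₁ dz₂ = |K|` if `K = -J`,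
and `0` otherwise. -/
theorem double_circle_integral_divided_powers (r : ℝ) (hr : 0 < r) (K J : ℤ) :
    (1 / (4 * (Real.pi : ℂ) ^ 2)) *
      (∮ z₁ in C(0, r), ∮ z₂ in C(0, r),
        ((z₁ ^ K - z₂ ^ K) / (z₁ - z₂)) * ((z₁ ^ J - z₂ ^ J) / (z₁ - z₂)))
    = if K = -J then ((|K| : ℤ) : ℂ) else 0 := by
  have hπ : (Real.pi : ℂ) ≠ 0 := ofReal_ne_zero.2 Real.pi_ne_zero
  set N : ℂ := ∑ j ∈ range K.natAbs, ∑ i ∈ range J.natAbs,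
      (if qexp K j + qexp J i = -1 then (1:ℂ) else 0) with hN
  have inner_eq : ∀ z₁ ∈ sphere (0:ℂ) r,
      (∮ z₂ in C(0, r), ((z₁ ^ K - z₂ ^ K) / (z₁ - z₂)) * ((z₁ ^ J - z₂ ^ J) / (z₁ - z₂)))
        = (N * (eps K * eps J * (2 * Real.pi * I))) * z₁ ^ (K + J - 1) := by
    intro z₁ hz₁
    have h1 : z₁ ≠ 0 := by
      rw [mem_sphere_zero_iff_norm] at hz₁
      intro h0; exact hr.ne' (by rw [← hz₁, h0, norm_zero])
    have step1 : (∮ z₂ in C(0, r),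
          ((z₁ ^ K - z₂ ^ K) / (z₁ - z₂)) * ((z₁ ^ J - z₂ ^ J) / (z₁ - z₂)))
        = ∮ z₂ in C(0, r), ∑ j ∈ range K.natAbs, ∑ i ∈ range J.natAbs,
            (eps K * eps J * z₁ ^ (pexp K j + pexp J i)) * z₂ ^ (qexp K j + qexp J i) := by
      apply circleIntegral_congr_ae hr.ne' (Set.toFinite ({0, z₁} : Set ℂ)).countable
      intro z₂ hz₂
      simp only [Set.mem_insert_iff, Set.mem_singleton_iff, not_or] at hz₂
      obtain ⟨h2, h12'⟩ := hz₂
      have h12 : z₁ ≠ z₂ := fun h => h12' h.symm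
      rw [dd_eq K h1 h2 h12, dd_eq J h1 h2 h12, mul_mul_mul_comm, Finset.sum_mul_sum,
        Finset.mul_sum]
      refine Finset.sum_congr rfl fun j hj => ?_
      rw [Finset.mul_sum]
      refine Finset.sum_congr rfl fun i hi => ?_
      rw [zpow_add₀ h1 (pexp K j) (pexp J i), zpow_add₀ h2 (qexp K j) (qexp J i)]
      ring
    rw [step1, circleIntegral_finset_sum _ _ (fun j _ => circleIntegrable_finset_sum _ _
      (fun i _ => circleIntegrable_const_mul_zpow hr _ _))]
    have step2 : ∀ j ∈ range K.natAbs,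
        (∮ z₂ in C(0, r), ∑ i ∈ range J.natAbs,
            (eps K * eps J * z₁ ^ (pexp K j + pexp J i)) * z₂ ^ (qexp K j + qexp J i))
        = ∑ i ∈ range J.natAbs, (if qexp K j + qexp J i = -1 then (1:ℂ) else 0)
            * (eps K * eps J * (2 * Real.pi * I) * z₁ ^ (K + J - 1)) := by
      intro j _
      rw [circleIntegral_finset_sum _ _ (fun i _ => circleIntegrable_const_mul_zpow hr _ _)]
      refine Finset.sum_congr rfl fun i _ => ?_
      rw [circleIntegral.integral_const_mul, circleIntegral_zpow hr]
      by_cases hc : qexp K j + qexp J i = -1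
      · rw [if_pos hc, if_pos hc]
        have hp : pexp K j + pexp J i = K + J - 1 := by
          have e1 := pexp_add_qexp K j
          have e2 := pexp_add_qexp J i
          omega
        rw [hp]; ring
      · rw [if_neg hc, if_neg hc]; ring
    rw [Finset.sum_congr rfl step2, hN]
    simp only [← Finset.sum_mul]
    ring
  rw [circleIntegral.integral_congr hr.le (fun z hz => inner_eq z hz),
    circleIntegral.integral_const_mul, circleIntegral_zpow hr]
  by_cases hKJ : K = -J
  · obtain rfl : J = -K := by omega
    rw [if_pos (show K = -(-K) by rw [neg_neg]),
      if_pos (show K + -K - 1 = -1 by ring)]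
    have hNval : N = (K.natAbs : ℂ) := by
      rw [hN]
      calc ∑ j ∈ range K.natAbs, ∑ i ∈ range (-K).natAbs,
            (if qexp K j + qexp (-K) i = -1 then (1:ℂ) else 0)
          = ∑ j ∈ range K.natAbs, ∑ i ∈ range K.natAbs,
            (if (j:ℤ) + (i:ℤ) = (K.natAbs:ℤ) - 1 then (1:ℂ) else 0) := by
            rw [Int.natAbs_neg]
            exact Finset.sum_congr rfl fun j _ => Finset.sum_congr rfl fun i _ =>
              if_congr (q_cond K j i) rfl rfl
        _ = K.natAbs := count_sum K.natAbs
    rw [hNval]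
    by_cases hK0 : K = 0
    · subst hK0; simp
    · rw [eps_mul_eps_neg hK0]
      rw [show ((|K| : ℤ) : ℂ) = (K.natAbs : ℂ) by rw [Int.abs_eq_natAbs, Int.cast_natCast]]
      have hI : (I:ℂ) * I = -1 := I_mul_I
      field_simp
      linear_combination (-(K.natAbs:ℂ) * 4) * hI
  · rw [if_neg hKJ, if_neg (show ¬(K + J - 1 = -1) by omega)]
    simp
end
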